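/- arXiv:2106.06308 — 4 statements merged into one kernel-verified Lean document; each statement's English description precedes it below -/
import Mathlib

section
/- Let p ≥ 2, d ≥ 1 be integers and let n, k be positive reals with k ≤ n. Then for every integer s with 1 ≤ s ≤ p*d/2, we have (e*k^2/(s*n))^s * (s/k)^(p*d) ≤ ( 2*p*d / min( sqrt(n*p*d), k*(1 + |ln(n*p*d/(e*k^2))|) ) )^(p*d). -/
set_option maxHeartbeats 1000000

private theorem sum_upperbound_aux (M S n k : ℝ) (hM : 2 ≤ M) (hS1 : 1 ≤ S)
    (hS2 : S ≤ M / 2) (hn : 0 < n) (hk : 0 < k) :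
    (Real.exp 1 * k ^ 2 / (S * n)) ^ S * (S / k) ^ M ≤
      (2 * M /
          min (Real.sqrt (n * M))
            (k * (1 + |Real.log (n * M / (Real.exp 1 * k ^ 2))|))) ^ M := by
  have hMpos : (0:ℝ) < M := by linarith
  have hSpos : (0:ℝ) < S := by linarith
  have hnM : (0:ℝ) < n * M := by positivity
  have hbase1 : (0:ℝ) < Real.exp 1 * k ^ 2 / (S * n) := by positivity
  have hbase2 : (0:ℝ) < S / k := by positivity
  have hLHS : (0:ℝ) < (Real.exp 1 * k ^ 2 / (S * n)) ^ S * (S / k) ^ M := by positivity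
  set a := Real.log S with ha
  set b := Real.log k with hb
  set c := Real.log n with hc
  set m' := Real.log M with hm'
  have hlog2 := Real.log_two_gt_d9
  have hlogLHS : Real.log ((Real.exp 1 * k ^ 2 / (S * n)) ^ S * (S / k) ^ M)
      = S * (1 + 2*b - a - c) + M * (a - b) := by
    rw [Real.log_mul (by positivity) (by positivity),
        Real.log_rpow hbase1, Real.log_rpow hbase2,
        Real.log_div (by positivity) (by positivity),
        Real.log_div (by positivity) (by positivity),
        Real.log_mul (by positivity) (by positivity),
        Real.log_mul (by positivity) (by positivity),
        Real.log_exp, Real.log_pow]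
    push_cast
    ring
  have haM : a ≤ m' - Real.log 2 := by
    have h1 : Real.log S ≤ Real.log (M / 2) := Real.log_le_log hSpos hS2
    rw [Real.log_div (by positivity) (by norm_num)] at h1
    linarith [h1]
  rcases le_or_gt m' (Real.log 2 + 1 + 2*b - c) with hcase | hcase
  · -- use sqrt term
    have h2 : (Real.exp 1 * k ^ 2 / (S * n)) ^ S * (S / k) ^ M
        ≤ (2 * M / Real.sqrt (n * M)) ^ M := by
      rw [← Real.log_le_log_iff hLHS (by positivity), hlogLHS,
          Real.log_rpow (by positivity),
          Real.log_div (by positivity) (by positivity),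
          Real.log_mul (by norm_num) (by positivity),
          Real.log_sqrt hnM.le,
          Real.log_mul (by positivity) (by positivity)]
      nlinarith [mul_nonneg (by linarith : (0:ℝ) ≤ M - S) (by linarith : (0:ℝ) ≤ m' - Real.log 2 - a),
        mul_nonneg (by linarith : (0:ℝ) ≤ M/2 - S) (by linarith : (0:ℝ) ≤ 1 + 2*b - c + Real.log 2 - m'),
        mul_nonneg hMpos.le (by linarith : (0:ℝ) ≤ 3 * Real.log 2 - 1)]
    refine h2.trans ?_
    have hminpos : (0:ℝ) < min (Real.sqrt (n * M))
        (k * (1 + |Real.log (n * M / (Real.exp 1 * k ^ 2))|)) :=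
      lt_min (Real.sqrt_pos.mpr hnM) (by positivity)
    apply Real.rpow_le_rpow (by positivity) ?_ hMpos.le
    exact div_le_div_of_nonneg_left (by positivity) hminpos (min_le_left _ _)
  · -- use k*(1+|log|) term
    have hlogval : Real.log (n * M / (Real.exp 1 * k ^ 2)) = c + m' - 1 - 2*b := by
      rw [Real.log_div (by positivity) (by positivity),
          Real.log_mul (by positivity) (by positivity),
          Real.log_mul (by positivity) (by positivity),
          Real.log_exp, Real.log_pow]
      push_cast; ring
    have hL0pos : (0:ℝ) < c + m' - 1 - 2*b := by linarith
    have habs : |Real.log (n * M / (Real.exp 1 * k ^ 2))| = c + m' - 1 - 2*b := by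
      rw [hlogval, abs_of_pos hL0pos]
    have h1L0 : (0:ℝ) < 1 + (c + m' - 1 - 2*b) := by linarith
    -- key exponential bound
    have hMS1 : (1:ℝ) ≤ M / S := (one_le_div hSpos).mpr (by linarith)
    have key : 1 + (c + m' - 1 - 2*b)
        ≤ (M / S) * Real.exp (S / M * (c + m' - 1 - 2*b)) := by
      have h2 : 1 + S / M * (c + m' - 1 - 2*b) ≤ Real.exp (S / M * (c + m' - 1 - 2*b)) := by
        linarith [Real.add_one_le_exp (S / M * (c + m' - 1 - 2*b))]
      have h3 : (M / S) * (1 + S / M * (c + m' - 1 - 2*b)) = M / S + (c + m' - 1 - 2*b) := by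
        field_simp
      calc 1 + (c + m' - 1 - 2*b) ≤ M / S + (c + m' - 1 - 2*b) := by linarith
        _ = (M / S) * (1 + S / M * (c + m' - 1 - 2*b)) := h3.symm
        _ ≤ (M / S) * Real.exp (S / M * (c + m' - 1 - 2*b)) := by
            apply mul_le_mul_of_nonneg_left h2 (by positivity)
    have hi : Real.log (1 + (c + m' - 1 - 2*b)) ≤ m' - a + S / M * (c + m' - 1 - 2*b) := by
      have h4 := Real.log_le_log h1L0 key
      rwa [Real.log_mul (by positivity) (by positivity),
          Real.log_div (by positivity) (by positivity), Real.log_exp] at h4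
    have hi' : M * Real.log (1 + (c + m' - 1 - 2*b))
        ≤ M * (m' - a) + S * (c + m' - 1 - 2*b) := by
      have h5 := mul_le_mul_of_nonneg_left hi hMpos.le
      have h6 : M * (m' - a + S / M * (c + m' - 1 - 2*b))
          = M * (m' - a) + S * (c + m' - 1 - 2*b) := by
        field_simp
      linarith [h5, h6.le, h6.ge]
    have hlogt : m' - a ≤ (M / S) / Real.exp 1 := by
      have h7 : Real.log (M / S / Real.exp 1) ≤ M / S / Real.exp 1 - 1 :=
        Real.log_le_sub_one_of_pos (by positivity)
      rw [Real.log_div (by positivity) (by positivity),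
          Real.log_div (by positivity) (by positivity), Real.log_exp] at h7
      linarith
    have hiii : S * (m' - a) ≤ M * Real.log 2 := by
      have h8 : S * (m' - a) ≤ S * ((M / S) / Real.exp 1) :=
        mul_le_mul_of_nonneg_left hlogt hSpos.le
      have h9 : S * ((M / S) / Real.exp 1) = M / Real.exp 1 := by
        field_simp
      have h10 : M / Real.exp 1 ≤ M * Real.log 2 := by
        have he := Real.exp_one_gt_d9
        have h11 : (0:ℝ) ≤ Real.log 2 * Real.exp 1 - 1 := by nlinarith
        rw [div_le_iff₀ (Real.exp_pos 1)]
        nlinarith [mul_nonneg hMpos.le h11]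
      linarith
    have h2 : (Real.exp 1 * k ^ 2 / (S * n)) ^ S * (S / k) ^ M
        ≤ (2 * M / (k * (1 + (c + m' - 1 - 2*b)))) ^ M := by
      rw [← Real.log_le_log_iff hLHS (by positivity), hlogLHS,
          Real.log_rpow (by positivity),
          Real.log_div (by positivity) (by positivity),
          Real.log_mul (by norm_num) (by positivity),
          Real.log_mul (by positivity) (by positivity)]
      linarith [hi', hiii]
    rw [habs]
    refine h2.trans ?_
    have hminpos : (0:ℝ) < min (Real.sqrt (n * M)) (k * (1 + (c + m' - 1 - 2*b))) :=
      lt_min (Real.sqrt_pos.mpr hnM) (by positivity)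
    apply Real.rpow_le_rpow (by positivity) ?_ hMpos.le
    exact div_le_div_of_nonneg_left (by positivity) hminpos (min_le_right _ _)

theorem sum_upperbound (p d : ℕ) (hp : 2 ≤ p) (hd : 1 ≤ d) (n k : ℝ)
    (hn : 0 < n) (hk : 0 < k) (hkn : k ≤ n) (s : ℕ) (hs1 : 1 ≤ s)
    (hs2 : (s : ℝ) ≤ p * d / 2) :
    (Real.exp 1 * k ^ 2 / (s * n)) ^ (s : ℝ) * (s / k) ^ ((p * d : ℕ) : ℝ) ≤
      (2 * p * d /
          min (Real.sqrt (n * p * d))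
            (k * (1 + |Real.log (n * p * d / (Real.exp 1 * k ^ 2))|))) ^
        ((p * d : ℕ) : ℝ) := by
  have hp' : (2:ℝ) ≤ (p:ℝ) := by exact_mod_cast hp
  have hd' : (1:ℝ) ≤ (d:ℝ) := by exact_mod_cast hd
  have hs1' : (1:ℝ) ≤ (s:ℝ) := by exact_mod_cast hs1
  have e1 : ((p * d : ℕ) : ℝ) = (p:ℝ) * d := by push_cast; ring
  have e2 : n * (p:ℝ) * d = n * ((p:ℝ) * d) := by ring
  have e3 : 2 * (p:ℝ) * d = 2 * ((p:ℝ) * d) := by ring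
  rw [e1, e2, e3]
  exact sum_upperbound_aux ((p:ℝ) * d) (s:ℝ) n k (by nlinarith) hs1' hs2 hn hk
end

section
/- Case 1 of the previous bound: if p ≥ 2, d ≥ 1 are integers, n, k > 0 are reals with e*k^2 ≥ n*p*d, then for every integer s with 1 ≤ s ≤ p*d/2, (e*k^2/(n*p*d))^(s/(p*d)) * (s/k) ≤ sqrt(p*d/n). -/
/-! With `r = e k² / (n p d) ≥ 1` and `s / (p d) ≤ 1/2`, the power `r ^ (s / (p d))` is at most `√r`,
and `√r · (p d / 2) / k = √(e / 4) · √(p d / n) ≤ √(p d / n)` because `e ≤ 4`. -/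

open Real

lemma Real.rpow_le_sqrt_of_one_le {r t : ℝ} (hr : 1 ≤ r) (ht : t ≤ 1 / 2) :
    r ^ t ≤ √r := by
  rw [sqrt_eq_rpow]
  exact rpow_le_rpow_of_exponent_le hr ht

lemma exp_one_div_four_le_one : exp 1 / 4 ≤ 1 := by
  rw [div_le_one four_pos]
  linarith [exp_one_lt_three]

lemma rpow_mul_div_le_sqrt {P n k s : ℝ} (hP : 0 < P) (hn : 0 < n) (hk : 0 < k)
    (hcase : n * P ≤ exp 1 * k ^ 2) (hs0 : 0 ≤ s) (hs : s ≤ P / 2) :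
    (exp 1 * k ^ 2 / (n * P)) ^ (s / P) * (s / k) ≤ √(P / n) := by
  set r := exp 1 * k ^ 2 / (n * P)
  have hr : 1 ≤ r := by rwa [one_le_div (by positivity)]
  have hexp : s / P ≤ 1 / 2 := by rw [div_le_iff₀ hP]; linarith
  calc r ^ (s / P) * (s / k)
      ≤ √r * (P / 2 / k) :=
        mul_le_mul (rpow_le_sqrt_of_one_le hr hexp) (by gcongr) (by positivity) (by positivity)
    _ = √(exp 1 / 4 * (P / n)) := by
        rw [← sqrt_sq (by positivity : 0 ≤ P / 2 / k), ← sqrt_mul (by positivity)]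
        congr 1
        simp only [r]
        field_simp
        ring
    _ ≤ √(P / n) := sqrt_le_sqrt (mul_le_of_le_one_left (by positivity) exp_one_div_four_le_one)

theorem sum_upperbound_case1_general (p d : ℕ) (n k : ℝ)
    (hn : 0 < n) (hk : 0 < k) (hcase : n * p * d ≤ Real.exp 1 * k ^ 2)
    (s : ℕ) (hs1 : 1 ≤ s) (hs2 : (s : ℝ) ≤ p * d / 2) :
    (Real.exp 1 * k ^ 2 / (n * p * d)) ^ ((s : ℝ) / (p * d)) * (s / k) ≤
      Real.sqrt (p * d / n) := by
  have hs : (1 : ℝ) ≤ s := by exact_mod_cast hs1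
  rw [mul_assoc] at hcase ⊢
  exact rpow_mul_div_le_sqrt (by linarith) hn hk hcase (by positivity) hs2

theorem sum_upperbound_case1 (p d : ℕ) (hp : 2 ≤ p) (hd : 1 ≤ d) (n k : ℝ)
    (hn : 0 < n) (hk : 0 < k) (hcase : n * p * d ≤ Real.exp 1 * k ^ 2)
    (s : ℕ) (hs1 : 1 ≤ s) (hs2 : (s : ℝ) ≤ p * d / 2) :
    (Real.exp 1 * k ^ 2 / (n * p * d)) ^ ((s : ℝ) / (p * d)) * (s / k) ≤
      Real.sqrt (p * d / n) :=
  sum_upperbound_case1_general p d n k hn hk hcase s hs1 hs2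
end

section
/- Case 2 of the sum-upper-bound lemma: if p ≥ 2, d ≥ 1 are integers, n, k > 0 are reals with e*k^2 < n*p*d, then for every integer s with 1 ≤ s ≤ p*d/2, (e*k^2/(n*p*d))^(s/(p*d)) * (s/k) ≤ (p*d) / (k * (1 + |ln(n*p*d/(e*k^2))|)). -/
lemma key_xexp (x L : ℝ) (hx : 0 < x) (hx2 : x ≤ 1/2) (hL : 0 < L) :
    x * Real.exp (-(x * L)) ≤ 1 / (1 + L) := by
  rcases le_total L 1 with h1 | h1
  · have h2 : Real.exp (-(x * L)) ≤ 1 := by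
      rw [Real.exp_le_one_iff]
      nlinarith
    have h3 : x * Real.exp (-(x * L)) ≤ 1/2 := by nlinarith [Real.exp_pos (-(x*L))]
    refine h3.trans ?_
    rw [div_le_div_iff₀ (by norm_num) (by linarith)]
    linarith
  · have hue : x * L ≤ Real.exp (x * L - 1) := by
      have := Real.add_one_le_exp (x * L - 1)
      linarith
    have hxe : x * Real.exp (-(x * L)) ≤ 1 / (Real.exp 1 * L) := by
      rw [le_div_iff₀ (by positivity)]
      have h3 : x * L * Real.exp (-(x * L)) ≤ Real.exp (-1) := by
        calc x * L * Real.exp (-(x * L)) ≤ Real.exp (x * L - 1) * Real.exp (-(x * L)) := by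
              apply mul_le_mul_of_nonneg_right hue (Real.exp_pos _).le
          _ = Real.exp (-1) := by rw [← Real.exp_add]; ring_nf
      calc x * Real.exp (-(x * L)) * (Real.exp 1 * L)
            = (x * L * Real.exp (-(x * L))) * Real.exp 1 := by ring
        _ ≤ Real.exp (-1) * Real.exp 1 := by
              apply mul_le_mul_of_nonneg_right h3 (Real.exp_pos _).le
        _ = 1 := by rw [← Real.exp_add]; norm_num
    refine hxe.trans ?_
    have he2 : (2:ℝ) ≤ Real.exp 1 := by
      have := Real.add_one_le_exp 1; linarith
    rw [div_le_div_iff₀ (by positivity) (by linarith)]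
    nlinarith

theorem sum_upperbound_case2 (p d : ℕ) (hp : 2 ≤ p) (hd : 1 ≤ d) (n k : ℝ)
    (hn : 0 < n) (hk : 0 < k) (hcase : Real.exp 1 * k ^ 2 < n * p * d)
    (s : ℕ) (hs1 : 1 ≤ s) (hs2 : (s : ℝ) ≤ p * d / 2) :
    (Real.exp 1 * k ^ 2 / (n * p * d)) ^ ((s : ℝ) / (p * d)) * (s / k) ≤
      p * d / (k * (1 + |Real.log (n * p * d / (Real.exp 1 * k ^ 2))|)) := by
  have hp0 : (0:ℝ) < p := by exact_mod_cast (by omega : 0 < p)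
  have hd0 : (0:ℝ) < d := by exact_mod_cast hd
  have hs0 : (0:ℝ) < s := by exact_mod_cast hs1
  have hpd : (0:ℝ) < (p:ℝ) * d := mul_pos hp0 hd0
  have hA : (0:ℝ) < Real.exp 1 * k ^ 2 := by positivity
  have hB : (0:ℝ) < n * p * d := by positivity
  set L := Real.log (n * p * d / (Real.exp 1 * k ^ 2)) with hLdef
  have hL : 0 < L := Real.log_pos (by rw [one_lt_div hA]; exact hcase)
  set x := (s:ℝ) / ((p:ℝ) * d) with hxdef
  have hx : 0 < x := div_pos hs0 hpd
  have hx2 : x ≤ 1/2 := by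
    rw [hxdef, div_le_div_iff₀ hpd (by norm_num)]
    linarith
  have hsx : x * ((p:ℝ) * d) = s := div_mul_cancel₀ _ (ne_of_gt hpd)
  have hlog : Real.log (Real.exp 1 * k ^ 2 / (n * p * d)) = -L := by
    rw [hLdef, ← Real.log_inv, inv_div]
  rw [abs_of_pos hL]
  calc (Real.exp 1 * k ^ 2 / (n * p * d)) ^ x * ((s:ℝ) / k)
      = (x * Real.exp (-(x * L))) * ((p:ℝ) * d / k) := by
        rw [Real.rpow_def_of_pos (div_pos hA hB), hlog, ← hsx]; ring_nf
    _ ≤ (1 / (1 + L)) * ((p:ℝ) * d / k) := by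
        apply mul_le_mul_of_nonneg_right (key_xexp x L hx hx2 hL) (by positivity)
    _ = (p:ℝ) * d / (k * (1 + L)) := by
        rw [div_mul_div_comm, one_mul]
        ring_nf
end

section
/- Let n ≥ 2k ≥ 2 be integers and ε ∈ (0,1]. Then the binomial coefficient ratio satisfies C(n,k) / C(n-k, ⌊ε²k/2⌋) ≥ ((n-k)/k)^(k(1-ε²/2)). -/
lemma choose_step_aux (n k : ℕ) (hk : 1 ≤ k) (hn : 2 * k ≤ n) :
    ∀ d m : ℕ, m + d ≤ k →
      (Nat.choose n m : ℝ) * (((n : ℝ) - k) / k) ^ d ≤ Nat.choose n (m + d) := by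
  have hk0 : (0:ℝ) < k := by exact_mod_cast hk
  have hnk : (k:ℝ) ≤ (n:ℝ) - k := by
    have h2 : ((2*k : ℕ):ℝ) ≤ n := by exact_mod_cast hn
    push_cast at h2
    linarith
  have hc0 : (0:ℝ) ≤ ((n:ℝ) - k) / k := div_nonneg (by linarith) hk0.le
  intro d
  induction d with
  | zero => intro m hm; simp
  | succ d ih =>
    intro m hm
    have hjk : m + d + 1 ≤ k := by omega
    have ih' := ih m (by omega)
    set j := m + d with hj
    have hjn : j ≤ n := by omega
    have hid : Nat.choose n (j+1) * (j+1) = Nat.choose n j * (n - j) :=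
      Nat.choose_succ_right_eq n j
    have hidR : (Nat.choose n (j+1) : ℝ) * (j+1) = (Nat.choose n j : ℝ) * ((n:ℝ) - j) := by
      have := congrArg (Nat.cast (R := ℝ)) hid
      push_cast [Nat.cast_sub hjn] at this
      linarith [this]
    have hstep : (Nat.choose n j : ℝ) * (((n:ℝ) - k) / k) ≤ Nat.choose n (j+1) := by
      rw [← mul_div_assoc, div_le_iff₀ hk0]
      have hch : (0:ℝ) ≤ Nat.choose n j := Nat.cast_nonneg _
      have hjk' : (j:ℝ) + 1 ≤ k := by exact_mod_cast hjk
      have hnn : (0:ℝ) ≤ n := Nat.cast_nonneg _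
      nlinarith [hidR, mul_le_mul_of_nonneg_left hjk' hnn]
    calc (Nat.choose n m : ℝ) * (((n : ℝ) - k) / k) ^ (d+1)
        = ((Nat.choose n m : ℝ) * (((n : ℝ) - k) / k) ^ d) * (((n : ℝ) - k) / k) := by ring
      _ ≤ (Nat.choose n j : ℝ) * (((n : ℝ) - k) / k) :=
          mul_le_mul_of_nonneg_right ih' hc0
      _ ≤ Nat.choose n (j+1) := hstep
      _ = Nat.choose n (m + (d+1)) := by rw [hj]; ring_nf

theorem choose_ratio_lower_bound (n k : ℕ) (hk : 1 ≤ k) (hn : 2 * k ≤ n)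
    (ε : ℝ) (hε0 : 0 < ε) (hε1 : ε ≤ 1) :
    (((n : ℝ) - k) / k) ^ ((k : ℝ) * (1 - ε ^ 2 / 2)) ≤
      (Nat.choose n k : ℝ) / (Nat.choose (n - k) ⌊ε ^ 2 * k / 2⌋₊ : ℝ) := by
  set m := ⌊ε ^ 2 * k / 2⌋₊ with hmdef
  have hk0 : (0:ℝ) < k := by exact_mod_cast hk
  have hmle : (m:ℝ) ≤ ε ^ 2 * k / 2 := Nat.floor_le (by positivity)
  have hε2 : ε ^ 2 ≤ 1 := by nlinarith
  have hmk : m ≤ k := by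
    have : (m:ℝ) ≤ k := by nlinarith
    exact_mod_cast this
  have hc1 : (1:ℝ) ≤ ((n:ℝ) - k) / k := by
    rw [le_div_iff₀ hk0]
    have h2 : ((2*k : ℕ):ℝ) ≤ n := by exact_mod_cast hn
    push_cast at h2
    linarith
  have hc0 : (0:ℝ) ≤ ((n:ℝ) - k) / k := by linarith
  -- choose (n-k) m positive
  have hmnk : m ≤ n - k := by omega
  have hpos : (0:ℝ) < Nat.choose (n-k) m := by
    exact_mod_cast Nat.choose_pos hmnk
  -- key chain
  have key : (Nat.choose n m : ℝ) * (((n:ℝ) - k)/k) ^ (k - m) ≤ Nat.choose n k := by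
    have := choose_step_aux n k hk hn (k - m) m (by omega)
    rwa [Nat.add_sub_cancel' hmk] at this
  have hmono : (Nat.choose (n-k) m : ℝ) ≤ Nat.choose n m := by
    exact_mod_cast Nat.choose_le_choose m (Nat.sub_le n k)
  have hexp : (((n:ℝ) - k)/k) ^ ((k:ℝ) * (1 - ε^2/2)) ≤ (((n:ℝ) - k)/k) ^ (k - m : ℕ) := by
    rw [← Real.rpow_natCast (((n:ℝ) - k)/k) (k - m)]
    apply Real.rpow_le_rpow_of_exponent_le hc1
    have : ((k - m : ℕ) : ℝ) = (k:ℝ) - m := by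
      push_cast [Nat.cast_sub hmk]; ring
    rw [this]
    nlinarith
  rw [le_div_iff₀ hpos]
  calc (((n:ℝ) - k)/k) ^ ((k:ℝ) * (1 - ε^2/2)) * Nat.choose (n-k) m
      ≤ (((n:ℝ) - k)/k) ^ (k - m : ℕ) * Nat.choose n m := by
        apply mul_le_mul hexp hmono (Nat.cast_nonneg _) (by positivity)
    _ ≤ Nat.choose n k := by rw [mul_comm]; exact key
end
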